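/- Let p be prime, Q = p^ℓ, m ≥ 1, t = 1 + ⌈log_p m⌉. Let e = (e_1,...,e_m) ∈ {0,...,Q-1}^m and suppose there exists s ∈ {0,...,ℓ-1} such that for every i ∈ [m] and every j ∈ {1,...,t}, the base-p digit e_i^{(s+j mod ℓ)} equals 0. Then for every f ≤_p e (coordinatewise p-shadow), Σ_{i=1}^m f_i mod* Q ≠ Q-1. -/
import Mathlib


/-- The `i`-th base-`p` digit of `n`. -/
def digit (p n i : ℕ) : ℕ := (Nat.digits p n).getD i 0

/-- `a ≤_p b`: every base-`p` digit of `a` is at most the corresponding digit of `b`. -/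
def pShadow (p a b : ℕ) : Prop := ∀ i, digit p a i ≤ digit p b i

/-- `a mod* Q`: maps `0` to `0` and nonzero `a` to its representative in `{1,…,Q-1}`
modulo `Q - 1`. -/
def modStar (Q a : ℕ) : ℕ := if a = 0 then 0 else (a - 1) % (Q - 1) + 1

lemma digit_eq_div_pow_mod (p : ℕ) (hp : 1 < p) (n i : ℕ) :
    digit p n i = n / p ^ i % p := by
  induction i generalizing n with
  | zero =>
    rcases Nat.eq_zero_or_pos n with h | h
    · simp [digit, h]
    · rw [digit, Nat.digits_def' hp h]
      simp
  | succ i ih =>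
    rcases Nat.eq_zero_or_pos n with h | h
    · simp [digit, h]
    · rw [digit, Nat.digits_def' hp h]
      simp only [List.getD_cons_succ]
      rw [← digit, ih, Nat.div_div_eq_div_mul, ← pow_succ']

lemma pShadow.le' (p : ℕ) (hp : 1 < p) (a b : ℕ) (h : pShadow p a b) : a ≤ b := by
  induction a using Nat.strong_induction_on generalizing b with
  | _ a ih =>
    rcases Nat.eq_zero_or_pos a with h0 | h0
    · omega
    · have hd : a / p ≤ b / p := by
        apply ih (a / p) (Nat.div_lt_self h0 hp)
        intro i
        have key : ∀ x : ℕ, digit p (x / p) i = digit p x (i + 1) := by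
          intro x
          rw [digit_eq_div_pow_mod p hp, digit_eq_div_pow_mod p hp,
            Nat.div_div_eq_div_mul, ← pow_succ']
        rw [key, key]
        exact h (i + 1)
      have h0' : a % p ≤ b % p := by
        have := h 0
        rwa [digit_eq_div_pow_mod p hp, digit_eq_div_pow_mod p hp, pow_zero,
          Nat.div_one, Nat.div_one] at this
      have ha := Nat.div_add_mod a p
      have hb := Nat.div_add_mod b p
      have := Nat.mul_le_mul_left p hd
      omega

lemma mod_mul_decomp (a b x : ℕ) (ha : 0 < a) (hb : 0 < b) :
    x % (a * b) = a * (x / a % b) + x % a := by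
  have hx : x = a * (x / a % b) + x % a + a * b * (x / a / b) := by
    have h1 := Nat.div_add_mod x a
    have h2 := Nat.div_add_mod (x / a) b
    calc x = a * (x / a) + x % a := (Nat.div_add_mod x a).symm
      _ = a * (b * (x / a / b) + x / a % b) + x % a := by rw [h2]
      _ = a * (x / a % b) + x % a + a * b * (x / a / b) := by ring
  have hlt : a * (x / a % b) + x % a < a * b := by
    have h3 : x / a % b ≤ b - 1 := by have := Nat.mod_lt (x / a) hb; omega
    have h4 : x % a < a := Nat.mod_lt _ ha
    have h5 : a * (x / a % b) ≤ a * (b - 1) := Nat.mul_le_mul_left a h3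
    have h6 : a * (b - 1) + a = a * b := by
      rw [← Nat.mul_succ]; congr 1; omega
    omega
  conv_lhs => rw [hx]
  rw [Nat.add_mul_mod_self_left, Nat.mod_eq_of_lt hlt]

lemma mod_pow_eq_of_digit_zero (p : ℕ) (hp : 1 < p) (x a n : ℕ)
    (h : ∀ j, a ≤ j → j < a + n → digit p x j = 0) :
    x % p ^ (a + n) = x % p ^ a := by
  induction n with
  | zero => rfl
  | succ n ih =>
    have h1 : x % p ^ (a + n) = x % p ^ a := ih (fun j hj hj2 => h j hj (by omega))
    have h2 : digit p x (a + n) = 0 := h _ (by omega) (by omega)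
    rw [digit_eq_div_pow_mod p hp] at h2
    have h3 : x % p ^ (a + n + 1) = p ^ (a + n) * (x / p ^ (a + n) % p) + x % p ^ (a + n) := by
      rw [pow_succ]
      exact mod_mul_decomp _ _ _ (pow_pos (by omega) _) (by omega)
    rw [show a + (n + 1) = a + n + 1 from rfl, h3, h2]
    simpa using h1

lemma key_rotate (p : ℕ) (hp : 1 < p) (ℓ t s : ℕ) (ht : 1 ≤ t) (htl : t ≤ ℓ) (hs : s < ℓ)
    (x : ℕ) (hx : x < p ^ ℓ)
    (hz : ∀ j ∈ Finset.Icc 1 t, digit p x ((s + j) % ℓ) = 0) :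
    ∃ y, y < p ^ (ℓ - t) ∧ (y = 0 ↔ x = 0) ∧
      p ^ (ℓ - 1 - s) * x ≡ p ^ t * y [MOD p ^ ℓ - 1] := by
  simp only [Finset.mem_Icc] at hz
  by_cases hcase : s + t < ℓ
  · -- no wraparound: zero digits at positions s+1 .. s+t
    obtain ⟨r, hr⟩ : ∃ r, ℓ = s + t + 1 + r := ⟨ℓ - s - t - 1, by omega⟩
    subst hr
    have hz' : ∀ j, s + 1 ≤ j → j < (s + 1) + t → digit p x j = 0 := by
      intro j h1 h2
      have := hz (j - s) ⟨by omega, by omega⟩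
      rwa [show s + (j - s) = j by omega, Nat.mod_eq_of_lt (by omega)] at this
    have hmod := mod_pow_eq_of_digit_zero p hp x (s + 1) t hz'
    rw [show s + 1 + t = s + t + 1 by omega] at hmod
    obtain ⟨lo, hlo_lt, hi, hhi_lt, hxeq⟩ :
        ∃ lo < p ^ (s + 1), ∃ hi < p ^ r, x = p ^ (s + t + 1) * hi + lo := by
      refine ⟨x % p ^ (s + 1), Nat.mod_lt _ (pow_pos (by omega) _),
        x / p ^ (s + t + 1), ?_, ?_⟩
      · apply Nat.div_lt_of_lt_mul
        calc x < p ^ (s + t + 1 + r) := hx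
          _ = p ^ (s + t + 1) * p ^ r := by rw [← pow_add]
      · rw [← hmod]
        exact (Nat.div_add_mod x (p ^ (s + t + 1))).symm
    refine ⟨p ^ r * lo + hi, ?_, ?_, ?_⟩
    · rw [show s + t + 1 + r - t = s + 1 + r by omega]
      have h1 : p ^ r * lo + p ^ r = p ^ r * (lo + 1) := by ring
      have h2 : p ^ r * (lo + 1) ≤ p ^ r * p ^ (s + 1) := Nat.mul_le_mul_left _ (by omega)
      have h3 : p ^ r * p ^ (s + 1) = p ^ (s + 1 + r) := by
        rw [← pow_add]; congr 1; omega
      omega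
    · have h1 : 0 < p ^ r := pow_pos (by omega) _
      have h2 : 0 < p ^ (s + t + 1) := pow_pos (by omega) _
      constructor
      · intro h
        have hle : lo ≤ p ^ r * lo := Nat.le_mul_of_pos_left lo h1
        have h0 : lo = 0 ∧ hi = 0 := by omega
        rw [hxeq, h0.1, h0.2]
        ring
      · intro h
        rw [h] at hxeq
        have hle : hi ≤ p ^ (s + t + 1) * hi := Nat.le_mul_of_pos_left hi h2
        have h0 : lo = 0 ∧ hi = 0 := by omega
        rw [h0.1, h0.2]; ring
    · rw [show s + t + 1 + r - 1 - s = t + r by omega, Nat.modEq_iff_dvd]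
      refine ⟨-(p ^ t * hi : ℕ), ?_⟩
      have hc : (1 : ℕ) ≤ p ^ (s + t + 1 + r) := Nat.one_le_pow _ _ (by omega)
      rw [Nat.cast_sub hc, hxeq]
      push_cast
      ring
  · -- wraparound case
    have htge : ℓ ≤ s + t := by omega
    set c := s + t + 1 - ℓ with hc
    have hc1 : 1 ≤ c := by omega
    have hcs : c ≤ s + 1 := by omega
    -- high digits s+1 .. ℓ-1 are zero
    have hz1 : ∀ j, s + 1 ≤ j → j < (s + 1) + (ℓ - 1 - s) → digit p x j = 0 := by
      intro j h1 h2
      have := hz (j - s) ⟨by omega, by omega⟩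
      rwa [show s + (j - s) = j by omega, Nat.mod_eq_of_lt (by omega)] at this
    -- low digits 0 .. c-1 are zero
    have hz2 : ∀ j, 0 ≤ j → j < 0 + c → digit p x j = 0 := by
      intro j _ h2
      have := hz (ℓ - s + j) ⟨by omega, by omega⟩
      rwa [show s + (ℓ - s + j) = ℓ + j by omega, Nat.add_mod_left, Nat.mod_eq_of_lt (by omega)]
        at this
    have hmod1 := mod_pow_eq_of_digit_zero p hp x (s + 1) (ℓ - 1 - s) hz1
    rw [show s + 1 + (ℓ - 1 - s) = ℓ by omega] at hmod1
    have hxs : x < p ^ (s + 1) := by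
      have := Nat.mod_eq_of_lt hx
      have h2 : x % p ^ (s + 1) < p ^ (s + 1) := Nat.mod_lt _ (pow_pos (by omega) _)
      omega
    have hmod2 := mod_pow_eq_of_digit_zero p hp x 0 c hz2
    rw [Nat.zero_add, pow_zero, Nat.mod_one] at hmod2
    obtain ⟨y, hxy⟩ : p ^ c ∣ x := Nat.dvd_of_mod_eq_zero hmod2
    have hpc : 0 < p ^ c := pow_pos (by omega) _
    have hylt : y < p ^ (ℓ - t) := by
      have hsplit : p ^ c * p ^ (ℓ - t) = p ^ (s + 1) := by
        rw [← pow_add]; congr 1; omega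
      have : p ^ c * y < p ^ c * p ^ (ℓ - t) := by rw [hsplit, ← hxy]; exact hxs
      exact Nat.lt_of_mul_lt_mul_left this
    refine ⟨y, hylt, ?_, ?_⟩
    · constructor
      · intro h; rw [hxy, h]; ring
      · intro h
        rw [h] at hxy
        have hle : y ≤ p ^ c * y := Nat.le_mul_of_pos_left y hpc
        omega
    · have heq : p ^ (ℓ - 1 - s) * x = p ^ t * y := by
        rw [hxy, ← Nat.mul_assoc, ← pow_add]
        congr 2
        omega
      rw [heq]

theorem stmt_12 (p : ℕ) (hp : p.Prime) (ℓ m t Q s : ℕ)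
    (hℓ : 1 ≤ ℓ) (hm : 1 ≤ m) (ht : 1 ≤ t) (hQ : Q = p ^ ℓ)
    (hmt : m ≤ p ^ (t - 1)) (hs : s < ℓ)
    (e : Fin m → ℕ) (he : ∀ i, e i ≤ Q - 1)
    (hzero : ∀ i, ∀ j ∈ Finset.Icc 1 t, digit p (e i) ((s + j) % ℓ) = 0) :
    ∀ f : Fin m → ℕ, (∀ i, pShadow p (f i) (e i)) →
      modStar Q (∑ i, f i) ≠ Q - 1 := by
  intro f hf hcon
  have hp2 : 2 ≤ p := hp.two_le
  have hQ2 : 2 ≤ Q := by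
    rw [hQ]
    calc 2 = 2 ^ 1 := by norm_num
      _ ≤ p ^ ℓ := Nat.pow_le_pow_left hp2 ℓ |>.trans' (Nat.pow_le_pow_right (by omega) hℓ)
  set S := ∑ i, f i with hSdef
  -- From the contradiction hypothesis, S ≠ 0 and (Q-1) ∣ S
  have hS0 : S ≠ 0 := by
    intro h
    rw [modStar, if_pos h] at hcon
    omega
  have hSdvd : (Q - 1) ∣ S := by
    rw [modStar, if_neg hS0] at hcon
    have h1 := Nat.div_add_mod (S - 1) (Q - 1)
    refine ⟨(S - 1) / (Q - 1) + 1, ?_⟩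
    rw [Nat.mul_add, Nat.mul_one]
    omega
  set t' := min t ℓ with ht'def
  have ht'1 : 1 ≤ t' := by omega
  have ht'l : t' ≤ ℓ := by omega
  -- f i ≤ e i and has zero digits at the required positions
  have hfe : ∀ i, f i ≤ e i := fun i => pShadow.le' p (by omega) _ _ (hf i)
  have key_i : ∀ i, ∃ y, y < p ^ (ℓ - t') ∧ (y = 0 ↔ f i = 0) ∧
      p ^ (ℓ - 1 - s) * f i ≡ p ^ t' * y [MOD Q - 1] := by
    intro i
    rw [hQ]
    apply key_rotate p (by omega) ℓ t' s ht'1 ht'l hs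
    · have h1 : e i ≤ p ^ ℓ - 1 := hQ ▸ he i
      have h2 := hfe i
      have h3 : 0 < p ^ ℓ := pow_pos (by omega) _
      omega
    · intro j hj
      simp only [Finset.mem_Icc] at hj
      have he0 := hzero i j (Finset.mem_Icc.mpr ⟨hj.1, by omega⟩)
      have := hf i ((s + j) % ℓ)
      omega
  choose y hy1 hy2 hy3 using key_i
  -- work in ZMod (Q-1)
  haveI : NeZero (Q - 1) := ⟨by omega⟩
  have hsum : ((p ^ t' * ∑ i, y i : ℕ) : ZMod (Q - 1)) =
      ((p ^ (ℓ - 1 - s) * S : ℕ) : ZMod (Q - 1)) := by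
    rw [hSdef]
    push_cast
    rw [Finset.mul_sum, Finset.mul_sum]
    apply Finset.sum_congr rfl
    intro i _
    have h := (ZMod.natCast_eq_natCast_iff _ _ _).mpr (hy3 i).symm
    push_cast at h
    exact h
  have hScast : ((S : ℕ) : ZMod (Q - 1)) = 0 := (ZMod.natCast_eq_zero_iff _ _).mpr hSdvd
  have hzero' : ((p ^ t' * ∑ i, y i : ℕ) : ZMod (Q - 1)) = 0 := by
    rw [hsum]
    push_cast
    rw [hScast]
    ring
  have hdvd2 : (Q - 1) ∣ p ^ t' * ∑ i, y i := (ZMod.natCast_eq_zero_iff _ _).mp hzero'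
  -- coprimality lets us cancel the power of p
  have hco : Nat.Coprime p (Q - 1) := by
    rw [hp.coprime_iff_not_dvd]
    intro hdvd
    have h1 : p ∣ Q := hQ ▸ dvd_pow_self p (by omega)
    have h2 := Nat.dvd_sub h1 hdvd
    rw [show Q - (Q - 1) = 1 by omega] at h2
    have := Nat.le_of_dvd one_pos h2
    omega
  have hco' : Nat.Coprime (Q - 1) (p ^ t') := (hco.pow_left t').symm
  have hdvdy : (Q - 1) ∣ ∑ i, y i := by
    rw [Nat.mul_comm] at hdvd2
    exact hco'.dvd_of_dvd_mul_right hdvd2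
  -- positivity of the sum of y's
  have hpos : 0 < ∑ i, y i := by
    have : ∃ i, f i ≠ 0 := by
      by_contra h
      push_neg at h
      exact hS0 (Finset.sum_eq_zero fun i _ => h i)
    obtain ⟨i, hi⟩ := this
    have hyi : y i ≠ 0 := fun h => hi ((hy2 i).mp h)
    have := Finset.single_le_sum (f := y) (fun j _ => Nat.zero_le _) (Finset.mem_univ i)
    omega
  have hle : Q - 1 ≤ ∑ i, y i := Nat.le_of_dvd hpos hdvdy
  -- case split on whether t ≥ ℓ
  by_cases hcase : ℓ ≤ t
  · have ht'eq : t' = ℓ := by omega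
    have : ∀ i, y i = 0 := by
      intro i
      have := hy1 i
      rw [ht'eq, Nat.sub_self, pow_zero] at this
      omega
    have : ∑ i, y i = 0 := Finset.sum_eq_zero fun i _ => this i
    omega
  · have ht'eq : t' = t := by omega
    rw [ht'eq] at hy1
    -- sum bound
    have hbound : ∑ i, y i ≤ m * (p ^ (ℓ - t) - 1) := by
      calc ∑ i, y i ≤ ∑ _i : Fin m, (p ^ (ℓ - t) - 1) :=
            Finset.sum_le_sum fun i _ => by have := hy1 i; omega
        _ = m * (p ^ (ℓ - t) - 1) := by
            rw [Finset.sum_const, Finset.card_univ, Fintype.card_fin, smul_eq_mul]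
    have hB1 : 1 ≤ p ^ (ℓ - t) := Nat.one_le_pow _ _ (by omega)
    have h1 : m * (p ^ (ℓ - t) - 1) ≤ p ^ (t - 1) * (p ^ (ℓ - t) - 1) :=
      Nat.mul_le_mul_right _ hmt
    have h2 : p ^ (t - 1) * (p ^ (ℓ - t) - 1) + p ^ (t - 1) = p ^ (t - 1) * p ^ (ℓ - t) := by
      rw [← Nat.mul_succ]
      congr 1
      omega
    have h3 : p ^ (t - 1) * p ^ (ℓ - t) = p ^ (ℓ - 1) := by
      rw [← pow_add]; congr 1; omega
    have h4 : p ^ (ℓ - 1) < p ^ ℓ := Nat.pow_lt_pow_right (by omega) (by omega)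
    have h5 : 1 ≤ p ^ (t - 1) := Nat.one_le_pow _ _ (by omega)
    have hQval : Q = p ^ ℓ := hQ
    omega
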